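/- arXiv:1709.00589 — 3 statements merged into one kernel-verified Lean document; each statement's English description precedes it below -/
import Mathlib

section
/- For every connected finite simple graph G of order n ≥ 2 and every integer r ≥ 3, the r-ASC index of G satisfies θ_r(G) ≤ 2r − 1. -/
/-!
Fix an edge `ab` of `G` and attach a path `w₀, …, w_{2r-2}` whose two ends are joined to every
vertex of `G` except `a`. Contracting `V ∖ {a}` to a point turns the path into a cycle of length
`2r`, and `a` hangs one step off that point. So the distance from `wⱼ` to `x` is the cyclic
distance of their positions, plus one if `x = a`: a function vanishing at `wⱼ`, `1`-Lipschitz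
along edges and decreasing along some edge everywhere else is the distance from `wⱼ`. Hence every
vertex has eccentricity `r`, except `a` and the antipode `w_{r-1}` of the contracted point, which
are at distance `r + 1` from each other. In the extension, vertices of `G` are within distance
`3` of each other, which is where `r ≥ 3` enters.
-/

namespace AscPaper

open SimpleGraph

/-- The eccentricity of a vertex `u` in a graph `G`, as an extended natural number:
the supremum of distances from `u` to all vertices. -/
noncomputable def ecc {V : Type*} (G : SimpleGraph V) (u : V) : ℕ∞ :=
  ⨆ v, G.edist u v

/-- The radius of a graph: the minimum eccentricity over all vertices. -/
noncomputable def graphRadius {V : Type*} (G : SimpleGraph V) : ℕ∞ :=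
  ⨅ u, ecc G u

/-- The diameter of a graph: the maximum eccentricity over all vertices. -/
noncomputable def graphDiam {V : Type*} (G : SimpleGraph V) : ℕ∞ :=
  ⨆ u, ecc G u

/-- The eccentric set of `u`: all vertices at distance exactly `ecc G u` from `u`. -/
def eccSet {V : Type*} (G : SimpleGraph V) (u : V) : Set V :=
  {v | G.edist u v = ecc G u}

/-- `H` is an `r`-ASC (almost self-centered) graph: `H` is connected, has radius `r`,
and all but exactly two vertices are central (have eccentricity equal to the radius). -/
def IsASC {V : Type*} (r : ℕ) (H : SimpleGraph V) : Prop :=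
  H.Connected ∧ graphRadius H = (r : ℕ∞) ∧
    {u : V | ecc H u ≠ graphRadius H}.ncard = 2

/-- The `r`-ASC index of a graph `G`: the minimum number `k` of vertices that need to be
added to `G` so that the resulting graph is an `r`-ASC graph containing `G` as an
induced subgraph. -/
noncomputable def theta {V : Type*} (r : ℕ) (G : SimpleGraph V) : ℕ :=
  sInf {k : ℕ | ∃ H : SimpleGraph (V ⊕ Fin k), IsASC r H ∧
    ∀ u v : V, H.Adj (Sum.inl u) (Sum.inl v) ↔ G.Adj u v}

end AscPaper

namespace SimpleGraph

variable {W : Type*} {H : SimpleGraph W} {f : W → ℕ}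

theorem Walk.le_add_length_of_forall_adj_le (hf : ∀ x y, H.Adj x y → f y ≤ f x + 1)
    {x y : W} (p : H.Walk x y) : f y ≤ f x + p.length := by
  induction p with
  | nil => simp
  | cons h _ ih =>
    rw [Walk.length_cons]
    linarith [hf _ _ h]

theorem le_add_edist_of_forall_adj_le (hf : ∀ x y, H.Adj x y → f y ≤ f x + 1) (x y : W) :
    (f y : ℕ∞) ≤ f x + H.edist x y := by
  rw [edist_eq_sInf, ENat.add_sInf]
  refine le_iInf₂ fun _ ⟨p, hp⟩ ↦ ?_
  rw [← hp]
  dsimp only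
  exact_mod_cast p.le_add_length_of_forall_adj_le hf

theorem edist_le_of_forall_exists_adj_lt {t : W} (hf : ∀ x ≠ t, ∃ y, H.Adj x y ∧ f y < f x)
    (x : W) : H.edist x t ≤ f x := by
  induction hx : f x using Nat.strong_induction_on generalizing x with
  | _ n ih =>
    obtain rfl | hxt := eq_or_ne x t
    · simp
    obtain ⟨y, hxy, hyx⟩ := hf x hxt
    calc H.edist x t ≤ H.edist x y + H.edist y t := SimpleGraph.edist_triangle
      _ ≤ 1 + f y := add_le_add (edist_eq_one_iff_adj.mpr hxy).le (ih _ (hx ▸ hyx) y rfl)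
      _ ≤ n := by norm_cast; omega

theorem edist_eq_of_forall_adj_le_of_forall_exists_adj_lt {t : W} (ht : f t = 0)
    (hle : ∀ x y, H.Adj x y → f y ≤ f x + 1)
    (hlt : ∀ x ≠ t, ∃ y, H.Adj x y ∧ f y < f x) (x : W) : H.edist t x = f x := by
  refine le_antisymm ?_ ?_
  · rw [edist_comm]
    exact edist_le_of_forall_exists_adj_lt hlt x
  · simpa [ht] using le_add_edist_of_forall_adj_le hle t x

end SimpleGraph

namespace AscPaper

open SimpleGraph

lemma edist_le_ecc {W : Type*} (H : SimpleGraph W) (x y : W) : H.edist x y ≤ ecc H x :=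
  le_iSup _ y

section Construction

open Sum

variable {V : Type*} (G : SimpleGraph V) (a : V) (r : ℕ)

def extendByPath : SimpleGraph (V ⊕ Fin (2 * r - 1)) where
  Adj
    | inl u, inl v => G.Adj u v
    | inl u, inr j | inr j, inl u => u ≠ a ∧ ((j : ℕ) = 0 ∨ (j : ℕ) = 2 * r - 2)
    | inr i, inr j => (i : ℕ) + 1 = j ∨ (j : ℕ) + 1 = i
  symm := by
    constructor
    rintro (u | i) (v | j) h
    exacts [h.symm, h, h, h.symm]
  loopless := by
    constructor
    rintro (u | i) h
    exacts [G.irrefl h, by omega]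

variable {G a r}

@[simp] lemma extendByPath_adj_inl_inl {u v : V} :
    (extendByPath G a r).Adj (inl u) (inl v) ↔ G.Adj u v := .rfl

@[simp] lemma extendByPath_adj_inl_inr {u : V} {j : Fin (2 * r - 1)} :
    (extendByPath G a r).Adj (inl u) (inr j) ↔ u ≠ a ∧ ((j : ℕ) = 0 ∨ (j : ℕ) = 2 * r - 2) :=
  .rfl

@[simp] lemma extendByPath_adj_inr_inl {u : V} {j : Fin (2 * r - 1)} :
    (extendByPath G a r).Adj (inr j) (inl u) ↔ u ≠ a ∧ ((j : ℕ) = 0 ∨ (j : ℕ) = 2 * r - 2) :=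
  .rfl

@[simp] lemma extendByPath_adj_inr_inr {i j : Fin (2 * r - 1)} :
    (extendByPath G a r).Adj (inr i) (inr j) ↔ (i : ℕ) + 1 = j ∨ (j : ℕ) + 1 = i := .rfl

/-- Position on the cycle of length `2r` obtained by contracting `V ∖ {a}` to a point. -/
def cyclePos : V ⊕ Fin (2 * r - 1) → ℕ
  | inl _ => 0
  | inr j => j + 1

def cycleDist (n s t : ℕ) : ℕ := min (Nat.dist s t) (n - Nat.dist s t)

variable (a) in
open scoped Classical in
noncomputable def modelDist (t x : V ⊕ Fin (2 * r - 1)) : ℕ :=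
  cycleDist (2 * r) (cyclePos t) (cyclePos x) + if x = inl a then 1 else 0

lemma cyclePos_le (x : V ⊕ Fin (2 * r - 1)) : cyclePos x ≤ 2 * r - 1 := by
  cases x with
  | inl u => simp [cyclePos]
  | inr j => simp only [cyclePos]; omega

open scoped Classical in
lemma modelDist_inl (t : V ⊕ Fin (2 * r - 1)) (u : V) :
    modelDist a t (inl u) = cycleDist (2 * r) (cyclePos t) 0 + if u = a then 1 else 0 := by
  simp [modelDist, cyclePos]

lemma modelDist_inr (t : V ⊕ Fin (2 * r - 1)) (j : Fin (2 * r - 1)) :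
    modelDist a t (inr j) = cycleDist (2 * r) (cyclePos t) (j + 1) := by
  simp [modelDist, cyclePos]

lemma modelDist_le_of_adj (t : V ⊕ Fin (2 * r - 1)) {x y : V ⊕ Fin (2 * r - 1)}
    (h : (extendByPath G a r).Adj x y) : modelDist a t y ≤ modelDist a t x + 1 := by
  have ht := cyclePos_le t
  rcases x with u | i <;> rcases y with v | j <;> simp only [modelDist_inl, modelDist_inr]
  · split_ifs <;> omega
  · obtain ⟨hu, hj⟩ := extendByPath_adj_inl_inr.mp h
    simp only [cycleDist, Nat.dist, if_neg hu]
    omega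
  · obtain ⟨hv, hj⟩ := extendByPath_adj_inr_inl.mp h
    simp only [cycleDist, Nat.dist, if_neg hv]
    omega
  · have hij := extendByPath_adj_inr_inr.mp h
    simp only [cycleDist, Nat.dist]
    omega

lemma exists_adj_modelDist_lt {b : V} (hab : G.Adj a b) (j : Fin (2 * r - 1))
    {x : V ⊕ Fin (2 * r - 1)} (hx : x ≠ inr j) :
    ∃ y, (extendByPath G a r).Adj x y ∧ modelDist a (inr j) y < modelDist a (inr j) x := by
  have hj := j.2
  rcases x with u | i
  · obtain rfl | hu := eq_or_ne u a
    · refine ⟨inl b, hab, ?_⟩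
      simp only [modelDist_inl, if_pos, if_neg hab.ne']
      omega
    by_cases hjr : (j : ℕ) < r
    · refine ⟨inr ⟨0, by omega⟩, by simp [hu], ?_⟩
      simp only [modelDist_inl, modelDist_inr, cyclePos, cycleDist, Nat.dist, if_neg hu]
      omega
    · refine ⟨inr ⟨2 * r - 2, by omega⟩, by simp [hu], ?_⟩
      simp only [modelDist_inl, modelDist_inr, cyclePos, cycleDist, Nat.dist, if_neg hu]
      omega
  · have hij : (i : ℕ) ≠ j := fun h ↦ hx (congrArg inr (Fin.ext h))
    have hi := i.2
    -- step once around the cycle, in the shorter direction towards `w_j`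
    by_cases hup : (i < j ∧ j - i ≤ r) ∨ (j < i ∧ r < i - j)
    · by_cases hend : (i : ℕ) = 2 * r - 2
      · refine ⟨inl b, by simp [hab.ne', hend], ?_⟩
        simp only [modelDist_inl, modelDist_inr, cyclePos, cycleDist, Nat.dist, if_neg hab.ne']
        omega
      · refine ⟨inr ⟨i + 1, by omega⟩, by simp, ?_⟩
        simp only [modelDist_inr, cyclePos, cycleDist, Nat.dist]
        omega
    · by_cases hend : (i : ℕ) = 0
      · refine ⟨inl b, by simp [hab.ne', hend], ?_⟩
        simp only [modelDist_inl, modelDist_inr, cyclePos, cycleDist, Nat.dist, if_neg hab.ne']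
        omega
      · refine ⟨inr ⟨i - 1, by omega⟩, by simp only [extendByPath_adj_inr_inr]; omega, ?_⟩
        simp only [modelDist_inr, cyclePos, cycleDist, Nat.dist]
        omega

lemma edist_extendByPath_inr {b : V} (hab : G.Adj a b) (j : Fin (2 * r - 1))
    (x : V ⊕ Fin (2 * r - 1)) :
    (extendByPath G a r).edist (inr j) x = modelDist a (inr j) x :=
  edist_eq_of_forall_adj_le_of_forall_exists_adj_lt (by simp [modelDist, cycleDist])
    (fun _ _ ↦ modelDist_le_of_adj _) (fun _ ↦ exists_adj_modelDist_lt hab j) x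

lemma edist_extendByPath_inl_inl_le {b : V} (hab : G.Adj a b) (hr : 0 < r) {u : V} (hu : u ≠ a)
    (v : V) :
    (extendByPath G a r).edist (inl u) (inl v) ≤ 3 := by
  let w₀ : V ⊕ Fin (2 * r - 1) := inr ⟨0, by omega⟩
  calc (extendByPath G a r).edist (inl u) (inl v)
      ≤ (extendByPath G a r).edist w₀ (inl u) + (extendByPath G a r).edist w₀ (inl v) :=
        SimpleGraph.edist_triangle.trans_eq (by rw [edist_comm])
    _ ≤ 3 := by
        rw [edist_extendByPath_inr hab, edist_extendByPath_inr hab]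
        norm_cast
        simp only [modelDist_inl, cyclePos, cycleDist, Nat.dist, if_neg hu]
        split_ifs <;> omega

lemma ecc_extendByPath_le {b : V} (hab : G.Adj a b) (hr : 3 ≤ r) {x : V ⊕ Fin (2 * r - 1)}
    (ha : x ≠ inl a) (hmid : cyclePos x ≠ r) : ecc (extendByPath G a r) x ≤ r := by
  refine iSup_le fun y ↦ ?_
  rcases x with u | i
  · have hu : u ≠ a := fun h ↦ ha (h ▸ rfl)
    rcases y with v | j
    · exact (edist_extendByPath_inl_inl_le hab (by omega) hu v).trans (by exact_mod_cast hr)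
    · rw [edist_comm, edist_extendByPath_inr hab, Nat.cast_le]
      simp only [modelDist_inl, cyclePos, cycleDist, Nat.dist, if_neg hu]
      omega
  · have hi := i.2
    simp only [cyclePos] at hmid
    rw [edist_extendByPath_inr hab, Nat.cast_le]
    rcases y with v | j
    · simp only [modelDist_inl, cyclePos, cycleDist, Nat.dist]
      split_ifs <;> omega
    · simp only [modelDist_inr, cyclePos, cycleDist, Nat.dist]
      omega

lemma le_ecc_extendByPath {b : V} (hab : G.Adj a b) (hr : 0 < r) (x : V ⊕ Fin (2 * r - 1)) :
    r ≤ ecc (extendByPath G a r) x := by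
  rcases x with u | i
  · refine (edist_le_ecc _ _ (inr ⟨r - 1, by omega⟩)).trans' ?_
    rw [edist_comm, edist_extendByPath_inr hab, Nat.cast_le]
    simp only [modelDist_inl, cyclePos, cycleDist, Nat.dist]
    omega
  · have hi := i.2
    -- the antipode of `w_i` on the cycle
    obtain ⟨y, hy⟩ : ∃ y, r ≤ modelDist a (inr i) y := by
      rcases lt_trichotomy ((i : ℕ) + 1) r with h | h | h
      · refine ⟨inr ⟨i + r, by omega⟩, ?_⟩
        simp only [modelDist_inr, cyclePos, cycleDist, Nat.dist]
        omega
      · refine ⟨inl a, ?_⟩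
        simp only [modelDist_inl, cyclePos, cycleDist, Nat.dist]
        omega
      · refine ⟨inr ⟨i - r, by omega⟩, ?_⟩
        simp only [modelDist_inr, cyclePos, cycleDist, Nat.dist]
        omega
    exact (edist_le_ecc _ _ y).trans' (by rw [edist_extendByPath_inr hab]; exact_mod_cast hy)

lemma edist_extendByPath_inr_inl_self {b : V} (hab : G.Adj a b) (hr : 0 < r) :
    (extendByPath G a r).edist (inr ⟨r - 1, by omega⟩) (inl a) = r + 1 := by
  rw [edist_extendByPath_inr hab, modelDist_inl, if_pos rfl]
  norm_cast
  simp only [cyclePos, cycleDist, Nat.dist]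
  omega

lemma graphRadius_extendByPath {b : V} (hab : G.Adj a b) (hr : 3 ≤ r) :
    graphRadius (extendByPath G a r) = r :=
  le_antisymm
    (iInf_le_of_le (inr ⟨0, by omega⟩)
      (ecc_extendByPath_le hab hr (by simp) (by simp only [cyclePos]; omega)))
    (le_iInf (le_ecc_extendByPath hab (by omega)))

lemma setOf_ecc_extendByPath_ne {b : V} (hab : G.Adj a b) (hr : 3 ≤ r) :
    {x | ecc (extendByPath G a r) x ≠ r} = {inl a, inr ⟨r - 1, by omega⟩} := by
  ext x
  simp only [Set.mem_ofPred_eq, Set.mem_insert_iff, Set.mem_singleton_iff]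
  constructor
  · intro hx
    by_contra! h
    refine hx (le_antisymm (ecc_extendByPath_le hab hr h.1 ?_)
      (le_ecc_extendByPath hab (by omega) x))
    rcases x with u | i
    · simp only [cyclePos]
      omega
    · simp only [cyclePos]
      exact fun hi ↦ h.2 (congrArg inr (Fin.ext (by dsimp only; omega)))
  · have hfar := edist_extendByPath_inr_inl_self hab (r := r) (by omega)
    have hlt : (r : ℕ∞) < r + 1 := by norm_cast; omega
    rintro (rfl | rfl) hx
    · have := edist_le_ecc (extendByPath G a r) (inl a) (inr ⟨r - 1, by omega⟩)
      rw [edist_comm, hfar, hx] at this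
      exact this.not_gt hlt
    · have := edist_le_ecc (extendByPath G a r) (inr ⟨r - 1, by omega⟩) (inl a)
      rw [hfar, hx] at this
      exact this.not_gt hlt

lemma connected_extendByPath {b : V} (hab : G.Adj a b) (hr : 0 < r) :
    (extendByPath G a r).Connected := by
  refine (connected_iff_exists_forall_reachable _).mpr ⟨inr ⟨0, by omega⟩, fun x ↦ ?_⟩
  refine reachable_of_edist_ne_top ?_
  rw [edist_extendByPath_inr hab]
  exact ENat.natCast_ne_top _

theorem isASC_extendByPath {b : V} (hab : G.Adj a b) (hr : 3 ≤ r) :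
    IsASC r (extendByPath G a r) := by
  refine ⟨connected_extendByPath hab (by omega), graphRadius_extendByPath hab hr, ?_⟩
  rw [graphRadius_extendByPath hab hr, setOf_ecc_extendByPath_ne hab hr]
  exact Set.ncard_pair (by simp)

end Construction

/-- For every connected finite simple graph `G` of order `n ≥ 2` and every integer
`r ≥ 3`, the `r`-ASC index of `G` satisfies `θ_r(G) ≤ 2r − 1`. -/
theorem theta_le_two_mul_sub_one {V : Type*} [Fintype V]
    (G : SimpleGraph V) (hconn : G.Connected) (hcard : 2 ≤ Fintype.card V)
    (r : ℕ) (hr : 3 ≤ r) :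
    theta r G ≤ 2 * r - 1 := by
  have : Nontrivial V := Fintype.one_lt_card_iff_nontrivial.mp hcard
  obtain ⟨b, hab⟩ := hconn.preconnected.exists_adj_of_nontrivial hconn.nonempty.some
  exact Nat.sInf_le ⟨extendByPath G _ r, isASC_extendByPath hab hr, fun _ _ ↦ .rfl⟩

end AscPaper
end

section
/- For every finite simple graph G and every integer r ≥ 3, the r-ASC index θ_r(G) equals 2r if and only if G is isomorphic to K_1 (the one-vertex graph). -/
namespace SimpleGraph

variable {W : Type*} {H : SimpleGraph W}

lemma natDist_le_edist (f : W → ℕ) (hf : ∀ a b, H.Adj a b → Nat.dist (f a) (f b) ≤ 1)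
    (u v : W) : (Nat.dist (f u) (f v) : ℕ∞) ≤ H.edist u v := by
  refine le_iInf fun p => ?_
  norm_cast
  induction p with
  | nil => simp
  | @cons a b c hab p ih =>
    have := hf a b hab
    have := Nat.dist.triangle_inequality (f a) (f b) (f c)
    rw [Walk.length_cons]
    omega

lemma Connected.exists_adj_dist_add_one (hc : H.Connected) {a b : W} (hab : a ≠ b) :
    ∃ c, H.Adj a c ∧ H.dist c b + 1 = H.dist a b := by
  obtain ⟨p, hp⟩ := hc.exists_walk_length_eq_dist a b
  cases p with
  | nil => exact absurd rfl hab
  | @cons _ c _ hac q =>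
    refine ⟨c, hac, ?_⟩
    have := dist_le q
    have := hc.dist_triangle (u := a) (v := c) (w := b)
    rw [dist_eq_one_iff_adj.mpr hac] at this
    rw [Walk.length_cons] at hp
    omega

/-- `H.dist t w + H.dist w y = H.dist t y` says that `w` lies on a `t`–`y` geodesic. -/
lemma Connected.exists_dist_eq_of_le_of_le (hc : H.Connected) {u t y : W} {i : ℕ}
    (ht : H.dist u t ≤ i) (hy : i ≤ H.dist u y) :
    ∃ w, H.dist u w = i ∧ H.dist t w + H.dist w y = H.dist t y := by
  induction hn : H.dist t y generalizing t with
  | zero =>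
    obtain rfl : t = y := hc.dist_eq_zero_iff.mp hn
    exact ⟨t, le_antisymm ht hy, by simp⟩
  | succ n ih =>
    by_cases hti : H.dist u t = i
    · exact ⟨t, hti, by simp [hn]⟩
    obtain ⟨c, htc, hcy⟩ := hc.exists_adj_dist_add_one (a := t) (b := y) (by
      rintro rfl; simp at hn)
    have htc1 : H.dist t c = 1 := dist_eq_one_iff_adj.mpr htc
    have := hc.dist_triangle (u := u) (v := t) (w := c)
    obtain ⟨w, hw, hcw⟩ := ih (t := c) (by omega) (by omega)
    refine ⟨w, hw, ?_⟩
    have := hc.dist_triangle (u := t) (v := c) (w := w)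
    have := hc.dist_triangle (u := t) (v := w) (w := y)
    omega

lemma edge_adj_left_iff {s t b : W} : (edge s t).Adj s b ↔ b = t ∧ s ≠ t := by
  grind

end SimpleGraph

namespace AscPaper

open SimpleGraph Finset

lemma ecc_eq_eccent {W : Type*} (G : SimpleGraph W) (u : W) : ecc G u = G.eccent u := rfl

section LowerBound

variable {W : Type*} {H : SimpleGraph W} {r : ℕ}

/-- The distance profile of an `r`-ASC graph whose two non-central vertices are `u` and `v`. -/
structure IsASCWith (H : SimpleGraph W) (r : ℕ) (u v : W) : Prop where
  connected : H.Connected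
  exists_le_dist : ∀ w, ∃ t, r ≤ H.dist w t
  dist_le_of_ne : ∀ w, w ≠ u → w ≠ v → ∀ t, H.dist w t ≤ r
  lt_dist : r < H.dist u v

lemma IsASC.exists_isASCWith [Finite W] (h : IsASC r H) : ∃ u v, IsASCWith H r u v := by
  obtain ⟨hc, hrad, hcard⟩ := h
  obtain ⟨u, v, -, huv⟩ := Set.ncard_eq_two.mp hcard
  have hcoe : ∀ a b, (H.dist a b : ℕ∞) = H.edist a b := fun a b => (hc a b).coe_dist_eq_edist
  have hnc : ∀ w, H.eccent w ≠ r ↔ w = u ∨ w = v := fun w => by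
    have := Set.ext_iff.mp huv w
    simp only [Set.mem_ofPred_eq, hrad, Set.mem_insert_iff, Set.mem_singleton_iff] at this
    exact this
  have hle : ∀ w, (r : ℕ∞) ≤ H.eccent w := fun w => hrad ▸ radius_le_eccent
  have hfar : ∀ w, ∃ t, (H.dist w t : ℕ∞) = H.eccent w := fun w =>
    (H.exists_edist_eq_eccent_of_finite w).imp fun t ht => (hcoe w t).trans ht
  have hcentral : ∀ w, w ≠ u → w ≠ v → ∀ t, H.dist w t ≤ r := fun w hu hv t => by
    have hw : H.eccent w = r := by by_contra hw; exact ((hnc w).mp hw).elim hu hv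
    exact_mod_cast (hcoe w t).trans_le (hw ▸ edist_le_eccent)
  refine ⟨u, v, hc, fun w => (hfar w).imp fun t ht => ?_, hcentral, ?_⟩
  · exact_mod_cast (hle w).trans_eq ht.symm
  obtain ⟨t, ht⟩ := hfar u
  have hrt : r < H.dist u t := by
    have := (hle u).lt_of_ne ((hnc u).mpr (Or.inl rfl)).symm
    rwa [← ht, Nat.cast_lt] at this
  obtain rfl : t = v := by
    by_contra htv
    have htu : t ≠ u := by rintro rfl; simp at hrt
    have := hcentral t htu htv u
    rw [H.dist_comm] at this
    omega
  exact hrt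

namespace IsASCWith

variable {u v : W}

lemma eq_or_eq_of_lt_dist (h : IsASCWith H r u v) {w t : W} (hwt : r < H.dist w t) :
    w = u ∨ w = v := by
  by_contra! hw
  exact absurd (h.dist_le_of_ne w hw.1 hw.2 t) (by omega)

/-- A pair at distance `r + 2` would give three non-central vertices: its endpoints and the
neighbour of one endpoint on a geodesic between them. -/
lemma dist_le (h : IsASCWith H r u v) (a b : W) : H.dist a b ≤ r + 1 := by
  by_contra! hab
  have hne : a ≠ b := by rintro rfl; simp at hab
  obtain ⟨c, hac, hcb⟩ := h.connected.exists_adj_dist_add_one hne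
  have hca : c ≠ a := hac.ne'
  have hcb' : c ≠ b := by rintro rfl; simp at hcb; omega
  have ha := h.eq_or_eq_of_lt_dist (w := a) (t := b) (by omega)
  have hb := h.eq_or_eq_of_lt_dist (w := b) (t := a) (by rw [H.dist_comm]; omega)
  have hc := h.eq_or_eq_of_lt_dist (w := c) (t := b) (by omega)
  rcases ha with rfl | rfl <;> rcases hb with rfl | rfl <;> rcases hc with rfl | rfl <;>
    contradiction

lemma dist_eq (h : IsASCWith H r u v) : H.dist u v = r + 1 :=
  le_antisymm (h.dist_le u v) h.lt_dist

lemma exists_dist_eq (h : IsASCWith H r u v) {i : ℕ} (hi : i ≤ r + 1) :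
    ∃ w, H.dist u w = i ∧ H.dist w v = r + 1 - i := by
  obtain ⟨w, hw, hwv⟩ := h.connected.exists_dist_eq_of_le_of_le (u := u) (t := u) (y := v)
    (i := i) (by simp) (h.dist_eq ▸ hi)
  exact ⟨w, hw, by rw [h.dist_eq, hw] at hwv; omega⟩

lemma card_level_pos [Fintype W] (h : IsASCWith H r u v) {i : ℕ} (hi : i ≤ r + 1) :
    0 < #{w | H.dist u w = i} := by
  obtain ⟨w, hw, -⟩ := h.exists_dist_eq hi
  exact card_pos.mpr ⟨w, by simpa using hw⟩

lemma one_lt_card_level [Fintype W] (h : IsASCWith H r u v) {i : ℕ} (hi : 2 ≤ i)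
    (hir : i + 1 ≤ r) : 1 < #{w | H.dist u w = i} := by
  obtain ⟨w, hw, hwv⟩ := h.exists_dist_eq (i := i) (by omega)
  by_contra! hcard
  have hlevel : ∀ w', H.dist u w' = i → w' = w := fun w' hw' =>
    card_le_one.mp hcard w' (by simpa using hw') w (by simpa using hw)
  have hwu : w ≠ u := by rintro rfl; simp at hw; omega
  have hwv' : w ≠ v := by rintro rfl; rw [h.dist_eq] at hw; omega
  obtain ⟨t, hwt⟩ := h.exists_le_dist w
  have hwt' := h.dist_le_of_ne w hwu hwv' t
  by_cases hit : i ≤ H.dist u t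
  · obtain ⟨w', hw', hw't⟩ := h.connected.exists_dist_eq_of_le_of_le (u := u) (t := u) (y := t)
      (i := i) (by simp) hit
    obtain rfl := hlevel w' hw'
    have := h.dist_le u t
    omega
  · obtain ⟨w', hw', htw'⟩ := h.connected.exists_dist_eq_of_le_of_le (u := u) (t := t) (y := v)
      (i := i) (by omega) (by rw [h.dist_eq]; omega)
    obtain rfl := hlevel w' hw'
    have := h.dist_le t v
    rw [H.dist_comm] at htw'
    omega

lemma card_level_one_add_card_level_le [Fintype W] (h : IsASCWith H r u v) (hr : 3 ≤ r) :
    #{w | H.dist u w = 1} + #{w | H.dist u w = r} + 2 * r ≤ Fintype.card W + 2 := by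
  set L : ℕ → ℕ := fun i => #{w | H.dist u w = i}
  have hW : Fintype.card W = ∑ i ∈ range (r + 2), L i :=
    card_eq_sum_card_fiberwise fun w _ => mem_range.mpr (Nat.lt_succ_of_le (h.dist_le u w))
  have hsplit : ∑ i ∈ range (r + 2), L i = L 0 + L 1 + ∑ i ∈ Ico 2 r, L i + L r + L (r + 1) := by
    rw [sum_range_succ, sum_range_succ, ← sum_range_add_sum_Ico _ (by omega : 2 ≤ r)]
    simp [sum_range_succ]
  have hmid : (r - 2) * 2 ≤ ∑ i ∈ Ico 2 r, L i := by
    simpa using card_nsmul_le_sum (Ico 2 r) L 2 fun i hi =>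
      h.one_lt_card_level (mem_Ico.mp hi).1 (mem_Ico.mp hi).2
  have h0 := h.card_level_pos (i := 0) (by omega)
  have hr1 := h.card_level_pos (i := r + 1) le_rfl
  simp only [L] at *
  omega

theorem two_mul_lt_card [Fintype W] (h : IsASCWith H r u v) (hr : 3 ≤ r) :
    2 * r < Fintype.card W := by
  by_contra! hW
  have hcount := h.card_level_one_add_card_level_le hr
  have hpos₁ := h.card_level_pos (i := 1) (by omega)
  have hposᵣ := h.card_level_pos (i := r) (by omega)
  have hlevel : ∀ i, #{w | H.dist u w = i} ≤ 1 → ∀ a b, H.dist u a = i → H.dist u b = i →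
      a = b := fun i hi a b ha hb => card_le_one.mp hi a (by simpa using ha) b (by simpa using hb)
  obtain ⟨x, hx, hxv⟩ := h.exists_dist_eq (i := 2) (by omega)
  obtain ⟨t, hxt⟩ := h.exists_le_dist x
  suffices H.dist x t + 1 ≤ r by omega
  have htu := h.dist_le u t
  rcases Nat.lt_or_ge (H.dist u t) r with htr | htr
  · rcases Nat.eq_zero_or_pos (H.dist u t) with ht0 | ht0
    · obtain rfl := h.connected.dist_eq_zero_iff.mp ht0
      rw [H.dist_comm]
      omega
    -- both `x` and `t` are reached from `u` through the unique vertex of level `1`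
    obtain ⟨a, ha, hat⟩ := h.connected.exists_dist_eq_of_le_of_le (u := u) (t := u) (y := t)
      (i := 1) (by simp) ht0
    obtain ⟨b, hb, hbx⟩ := h.connected.exists_dist_eq_of_le_of_le (u := u) (t := u) (y := x)
      (i := 1) (by simp) (by omega)
    obtain rfl := hlevel 1 (by omega) a b ha hb
    have := h.connected.dist_triangle (u := x) (v := a) (w := t)
    have hxa : H.dist x a = H.dist a x := H.dist_comm
    omega
  · rcases Nat.eq_or_lt_of_le htr with htr | htr
    · obtain ⟨a, ha, hxa⟩ := h.connected.exists_dist_eq_of_le_of_le (u := u) (t := x) (y := v)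
        (i := r) (by omega) (by rw [h.dist_eq]; omega)
      obtain rfl := hlevel r (by omega) a t ha htr.symm
      omega
    · obtain rfl : t = v := by
        rcases h.eq_or_eq_of_lt_dist (w := t) (t := u) (by rw [H.dist_comm]; omega) with rfl | rfl
        · simp at htr
        · rfl
      omega

end IsASCWith

theorem IsASC.two_mul_lt_card [Fintype W] (h : IsASC r H) (hr : 3 ≤ r) :
    2 * r < Fintype.card W := by
  obtain ⟨u, v, huv⟩ := h.exists_isASCWith
  exact huv.two_mul_lt_card hr

end LowerBound

/-- The distance between positions `a, b < m` on the cycle `C_m`. -/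
def cycDist (m a b : ℕ) : ℕ := min (Nat.dist a b) (m - Nat.dist a b)

lemma cycDist_comm (m a b : ℕ) : cycDist m a b = cycDist m b a := by
  simp [cycDist, Nat.dist_comm]

@[simp] lemma cycDist_self (m a : ℕ) : cycDist m a a = 0 := by
  simp [cycDist]

lemma cycDist_le {r a b : ℕ} (ha : a < 2 * r) (hb : b < 2 * r) : cycDist (2 * r) a b ≤ r := by
  simp only [cycDist, Nat.dist]
  omega

lemma eq_of_cycDist_eq_zero {m a b : ℕ} (ha : a < m) (hb : b < m) (h : cycDist m a b = 0) :
    a = b := by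
  simp only [cycDist, Nat.dist] at h
  omega

lemma dist_cycDist_le_one {m q a b : ℕ} (hq : q < m) (ha : a < m) (hb : b < m)
    (h : cycDist m a b ≤ 1) : Nat.dist (cycDist m q a) (cycDist m q b) ≤ 1 := by
  simp only [cycDist, Nat.dist] at *
  omega

lemma exists_cycDist_eq_one_and_cycDist_add_one {m a b : ℕ} (ha : a < m) (hb : b < m)
    (hab : a ≠ b) : ∃ c < m, cycDist m a c = 1 ∧ cycDist m c b + 1 = cycDist m a b := by
  -- step forward from `a` if that brings it closer to `b`, backward otherwise
  by_cases h : cycDist m (if a + 1 = m then 0 else a + 1) b + 1 = cycDist m a b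
  · refine ⟨_, ?_, ?_, h⟩ <;> simp only [cycDist, Nat.dist] at * <;> split_ifs at * <;> omega
  · refine ⟨if a = 0 then m - 1 else a - 1, ?_, ?_, ?_⟩ <;>
      simp only [cycDist, Nat.dist] at * <;> split_ifs at * <;> omega

lemma exists_cycDist_eq_one {m a : ℕ} (hm : 2 ≤ m) (ha : a < m) :
    ∃ c < m, cycDist m a c = 1 := by
  refine ⟨if a + 1 = m then 0 else a + 1, ?_⟩
  simp only [cycDist, Nat.dist]
  split_ifs <;> omega

lemma exists_cycDist_eq {r a : ℕ} (ha : a < 2 * r) : ∃ q < 2 * r, cycDist (2 * r) a q = r := by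
  refine ⟨if a + r < 2 * r then a + r else a - r, ?_⟩
  simp only [cycDist, Nat.dist]
  split_ifs <;> omega

lemma eq_of_cycDist_eq {r a q q' : ℕ} (hq : q < 2 * r) (hq' : q' < 2 * r)
    (h : cycDist (2 * r) a q = r) (h' : cycDist (2 * r) a q' = r) : q = q' := by
  simp only [cycDist, Nat.dist] at h h'
  omega

section Blowup

variable {W : Type*} {r : ℕ}

def cycleBlowup (r : ℕ) (pos : W → ℕ) (pend : W) (E : SimpleGraph W) : SimpleGraph W where
  Adj a b := E.Adj a b ∨ a ≠ pend ∧ b ≠ pend ∧ cycDist (2 * r) (pos a) (pos b) = 1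
  symm := ⟨fun a b => by
    rintro (hab | ⟨ha, hb, hab⟩)
    exacts [Or.inl hab.symm, Or.inr ⟨hb, ha, cycDist_comm .. ▸ hab⟩]⟩
  loopless := ⟨fun a => by
    rintro (haa | ⟨-, -, haa⟩)
    exacts [E.loopless.irrefl a haa, by simp at haa]⟩

section cycleBlowup

variable {pos : W → ℕ} {pend : W} {E : SimpleGraph W} {a b : W}

lemma cycleBlowup_adj : (cycleBlowup r pos pend E).Adj a b ↔
    E.Adj a b ∨ a ≠ pend ∧ b ≠ pend ∧ cycDist (2 * r) (pos a) (pos b) = 1 := Iff.rfl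

lemma cycleBlowup_edist_le_one (ha : a ≠ pend) (hb : b ≠ pend)
    (hab : cycDist (2 * r) (pos a) (pos b) = 1) : (cycleBlowup r pos pend E).edist a b ≤ 1 :=
  (edist_eq_one_iff_adj.mpr (Or.inr ⟨ha, hb, hab⟩)).le

end cycleBlowup

/-- Conditions making `cycleBlowup r pos pend E` an `r`-ASC graph whose non-central vertices are
`pend` and `far`. -/
structure IsPendantBlowup (r : ℕ) (pos : W → ℕ) (pend : W) (E : SimpleGraph W) (p₀ : ℕ)
    (far : W) : Prop where
  pos_lt : ∀ a ≠ pend, pos a < 2 * r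
  exists_pos_eq : ∀ i < 2 * r, ∃ a ≠ pend, pos a = i
  pos_eq_of_adj : ∀ a b, E.Adj a b → a ≠ pend → b ≠ pend → pos a = pos b
  pos_eq_of_adj_pend : ∀ b, E.Adj pend b → pos b = p₀
  exists_adj_pend : ∃ b, E.Adj pend b
  far_ne : far ≠ pend
  cycDist_far : cycDist (2 * r) p₀ (pos far) = r
  eq_far : ∀ a ≠ pend, pos a = pos far → a = far

open Classical in
noncomputable def potential (r : ℕ) (pos : W → ℕ) (pend : W) (p₀ q : ℕ) (a : W) : ℕ :=
  if a = pend then cycDist (2 * r) q p₀ + 1 else cycDist (2 * r) q (pos a)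

namespace IsPendantBlowup

variable {pos : W → ℕ} {pend far : W} {E : SimpleGraph W} {p₀ : ℕ}

local notation "B" => cycleBlowup r pos pend E

lemma cycDist_le_one_of_adj (h : IsPendantBlowup r pos pend E p₀ far) {a b : W}
    (ha : a ≠ pend) (hb : b ≠ pend) (hab : (B).Adj a b) :
    cycDist (2 * r) (pos a) (pos b) ≤ 1 := by
  rcases cycleBlowup_adj.mp hab with hab | ⟨-, -, hab⟩
  · simp [h.pos_eq_of_adj a b hab ha hb]
  · exact hab.le

lemma pos_eq_of_cycleBlowup_adj_pend (h : IsPendantBlowup r pos pend E p₀ far) {b : W}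
    (hb : (B).Adj pend b) : pos b = p₀ := by
  rcases cycleBlowup_adj.mp hb with hb | ⟨hp, -, -⟩
  exacts [h.pos_eq_of_adj_pend b hb, absurd rfl hp]

lemma exists_cycleBlowup_adj_pend (h : IsPendantBlowup r pos pend E p₀ far) :
    ∃ b, (B).Adj pend b ∧ b ≠ pend ∧ pos b = p₀ := by
  obtain ⟨b, hb⟩ := h.exists_adj_pend
  exact ⟨b, Or.inl hb, hb.ne.symm, h.pos_eq_of_adj_pend b hb⟩

lemma lt_two_mul (h : IsPendantBlowup r pos pend E p₀ far) : p₀ < 2 * r := by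
  obtain ⟨b, -, hb, rfl⟩ := h.exists_cycleBlowup_adj_pend
  exact h.pos_lt b hb

lemma edist_le_cycDist (h : IsPendantBlowup r pos pend E p₀ far) {n : ℕ} {a b : W}
    (ha : a ≠ pend) (hb : b ≠ pend) (hab : cycDist (2 * r) (pos a) (pos b) = n + 1) :
    (B).edist a b ≤ n + 1 := by
  induction n generalizing a with
  | zero => exact cycleBlowup_edist_le_one ha hb hab
  | succ n ih =>
    obtain ⟨i, hi, hai, hib⟩ := exists_cycDist_eq_one_and_cycDist_add_one (h.pos_lt a ha)
      (h.pos_lt b hb) (by rintro hab'; simp [hab'] at hab)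
    obtain ⟨c, hc, rfl⟩ := h.exists_pos_eq i hi
    calc (B).edist a b ≤ (B).edist a c + (B).edist c b := SimpleGraph.edist_triangle
      _ ≤ 1 + (n + 1) := add_le_add (cycleBlowup_edist_le_one ha hc hai) (ih hc (by omega))
      _ = n + 1 + 1 := add_comm _ _

lemma edist_le_max (h : IsPendantBlowup r pos pend E p₀ far) {a b : W} (ha : a ≠ pend)
    (hb : b ≠ pend) : (B).edist a b ≤ (max 2 (cycDist (2 * r) (pos a) (pos b)) : ℕ) := by
  rcases Nat.eq_zero_or_pos (cycDist (2 * r) (pos a) (pos b)) with hab | hab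
  · have hpos := eq_of_cycDist_eq_zero (h.pos_lt a ha) (h.pos_lt b hb) hab
    obtain ⟨i, hi, hai⟩ := exists_cycDist_eq_one (by have := h.pos_lt a ha; omega)
      (h.pos_lt a ha)
    obtain ⟨c, hc, rfl⟩ := h.exists_pos_eq i hi
    have hcb : cycDist (2 * r) (pos c) (pos b) = 1 := by rw [cycDist_comm, ← hpos, hai]
    calc (B).edist a b ≤ (B).edist a c + (B).edist c b := SimpleGraph.edist_triangle
      _ ≤ 1 + 1 := add_le_add (cycleBlowup_edist_le_one ha hc hai)
          (cycleBlowup_edist_le_one hc hb hcb)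
      _ = (max 2 (cycDist (2 * r) (pos a) (pos b)) : ℕ) := by simp [hab, one_add_one_eq_two]
  · obtain ⟨n, hn⟩ := Nat.exists_eq_add_one.mpr hab
    refine (h.edist_le_cycDist ha hb hn).trans ?_
    rw [hn]
    exact_mod_cast le_max_right _ _

lemma edist_pend_le (h : IsPendantBlowup r pos pend E p₀ far) {t : W} (ht : t ≠ pend) :
    (B).edist pend t ≤ (max 2 (cycDist (2 * r) p₀ (pos t)) : ℕ) + 1 := by
  obtain ⟨b, hpb, hb, rfl⟩ := h.exists_cycleBlowup_adj_pend
  calc (B).edist pend t ≤ (B).edist pend b + (B).edist b t := SimpleGraph.edist_triangle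
    _ ≤ 1 + (max 2 (cycDist (2 * r) (pos b) (pos t)) : ℕ) :=
      add_le_add (edist_eq_one_iff_adj.mpr hpb).le (h.edist_le_max hb ht)
    _ = _ := add_comm _ _

lemma edist_le_add_one (h : IsPendantBlowup r pos pend E p₀ far) (hr : 2 ≤ r) (a b : W) :
    (B).edist a b ≤ r + 1 := by
  have hpend : ∀ t ≠ pend, (B).edist pend t ≤ r + 1 := fun t ht =>
    (h.edist_pend_le ht).trans (by
      have := cycDist_le h.lt_two_mul (h.pos_lt t ht)
      exact_mod_cast Nat.add_le_add_right (max_le hr this) 1)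
  by_cases ha : a = pend
  · by_cases hb : b = pend
    · simp [ha, hb]
    · exact ha ▸ hpend b hb
  by_cases hb : b = pend
  · rw [hb, edist_comm]
    exact hpend a ha
  · have := cycDist_le (h.pos_lt a ha) (h.pos_lt b hb)
    refine (h.edist_le_max ha hb).trans ?_
    exact_mod_cast (max_le hr this).trans (Nat.le_succ r)

lemma natDist_potential_le_one (h : IsPendantBlowup r pos pend E p₀ far) {q : ℕ}
    (hq : q < 2 * r) {a b : W} (hab : (B).Adj a b) :
    Nat.dist (potential r pos pend p₀ q a) (potential r pos pend p₀ q b) ≤ 1 := by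
  by_cases ha : a = pend
  · subst ha
    simp [potential, hab.ne.symm, h.pos_eq_of_cycleBlowup_adj_pend hab, Nat.dist]
  by_cases hb : b = pend
  · subst hb
    simp [potential, hab.ne, h.pos_eq_of_cycleBlowup_adj_pend hab.symm, Nat.dist]
  simpa [potential, ha, hb] using dist_cycDist_le_one hq (h.pos_lt a ha) (h.pos_lt b hb)
    (h.cycDist_le_one_of_adj ha hb hab)

lemma potential_le_edist (h : IsPendantBlowup r pos pend E p₀ far) {t : W} (ht : t ≠ pend)
    (a : W) : (potential r pos pend p₀ (pos t) a : ℕ∞) ≤ (B).edist a t := by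
  have := natDist_le_edist _ (fun a b => h.natDist_potential_le_one (h.pos_lt t ht)) a t
  rwa [show potential r pos pend p₀ (pos t) t = 0 by simp [potential, ht],
    Nat.dist_zero_right] at this

lemma exists_le_edist (h : IsPendantBlowup r pos pend E p₀ far) {a : W} (ha : a ≠ pend) :
    ∃ t, (r : ℕ∞) ≤ (B).edist a t := by
  obtain ⟨q, hq, haq⟩ := exists_cycDist_eq (h.pos_lt a ha)
  obtain ⟨t, ht, rfl⟩ := h.exists_pos_eq q hq
  exact ⟨t, by simpa [potential, ha, cycDist_comm, haq] using h.potential_le_edist ht a⟩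

lemma le_edist_pend_far (h : IsPendantBlowup r pos pend E p₀ far) :
    (r : ℕ∞) + 1 ≤ (B).edist pend far := by
  simpa [potential, cycDist_comm, h.cycDist_far] using h.potential_le_edist h.far_ne pend

lemma le_eccent (h : IsPendantBlowup r pos pend E p₀ far) (a : W) : (r : ℕ∞) ≤ (B).eccent a := by
  obtain rfl | ha := eq_or_ne a pend
  · exact le_self_add.trans (h.le_edist_pend_far.trans edist_le_eccent)
  · obtain ⟨t, ht⟩ := h.exists_le_edist ha
    exact ht.trans edist_le_eccent

lemma eccent_of_ne (h : IsPendantBlowup r pos pend E p₀ far) (hr : 3 ≤ r) {a : W}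
    (ha : a ≠ pend) (haf : a ≠ far) : (B).eccent a = r := by
  refine le_antisymm ((eccent_le_iff _ _).mpr fun t => ?_) (h.le_eccent a)
  by_cases ht : t = pend
  · -- only the antipode `pos far` of `p₀` is at cycle distance `r` from `p₀`
    have hne : cycDist (2 * r) p₀ (pos a) ≠ r := fun hpa => haf <| h.eq_far a ha <|
      eq_of_cycDist_eq (h.pos_lt a ha) (h.pos_lt far h.far_ne) hpa h.cycDist_far
    have := cycDist_le h.lt_two_mul (h.pos_lt a ha)
    rw [ht, edist_comm]
    refine (h.edist_pend_le ha).trans ?_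
    exact_mod_cast (by omega : max 2 (cycDist (2 * r) p₀ (pos a)) + 1 ≤ r)
  · have := cycDist_le (h.pos_lt a ha) (h.pos_lt t ht)
    refine (h.edist_le_max ha ht).trans ?_
    exact_mod_cast (by omega : max 2 (cycDist (2 * r) (pos a) (pos t)) ≤ r)

lemma eccent_far (h : IsPendantBlowup r pos pend E p₀ far) (hr : 2 ≤ r) :
    (B).eccent far = r + 1 :=
  le_antisymm ((eccent_le_iff _ _).mpr (h.edist_le_add_one hr far))
    ((edist_comm (G := B) ▸ h.le_edist_pend_far).trans edist_le_eccent)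

lemma eccent_pend (h : IsPendantBlowup r pos pend E p₀ far) (hr : 2 ≤ r) :
    (B).eccent pend = r + 1 :=
  le_antisymm ((eccent_le_iff _ _).mpr (h.edist_le_add_one hr pend))
    (h.le_edist_pend_far.trans edist_le_eccent)

theorem isASC (h : IsPendantBlowup r pos pend E p₀ far) (hr : 3 ≤ r) : IsASC r B := by
  obtain ⟨b, -, hb, hbp⟩ := h.exists_cycleBlowup_adj_pend
  have hbf : b ≠ far := by
    rintro rfl
    have := h.cycDist_far
    rw [hbp, cycDist_self] at this
    omega
  have hrad : graphRadius B = r :=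
    le_antisymm (iInf_le_of_le b (h.eccent_of_ne hr hb hbf).le) (le_iInf h.le_eccent)
  have hne : (r : ℕ∞) + 1 ≠ r := by exact_mod_cast r.succ_ne_self
  refine ⟨?_, hrad, ?_⟩
  · have : Nonempty W := ⟨pend⟩
    exact ⟨fun a b => reachable_of_edist_ne_top
      (ne_top_of_le_ne_top (by simp) (h.edist_le_add_one (by omega) a b))⟩
  · convert Set.ncard_pair h.far_ne.symm
    ext a
    simp only [Set.mem_ofPred_eq, Set.mem_insert_iff, Set.mem_singleton_iff, hrad, ecc_eq_eccent]
    by_cases ha : a = pend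
    · simp [ha, h.eccent_pend (by omega), hne]
    by_cases haf : a = far
    · simp [haf, h.eccent_far (by omega), hne]
    simp [ha, haf, h.eccent_of_ne hr ha haf]

end IsPendantBlowup

end Blowup

section Constructions

open Sum

variable {V : Type*} {n r : ℕ}

def sumPos : V ⊕ Fin n → ℕ := Sum.elim (fun _ => 0) (fun i => i + 1)

@[simp] lemma sumPos_inl (x : V) : sumPos (inl x : V ⊕ Fin n) = 0 := rfl

@[simp] lemma sumPos_inr (i : Fin n) : sumPos (inr i : V ⊕ Fin n) = i + 1 := rfl

lemma isPendantBlowup_sumPos (hr : 2 ≤ r) {v₀ w : V} (hw : w ≠ v₀) {p₀ : ℕ} (hp₀ : p₀ ≤ 1)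
    {E : SimpleGraph (V ⊕ Fin (2 * r - 1))}
    (hE : ∀ a b, E.Adj a b → a ≠ inl v₀ → b ≠ inl v₀ → sumPos a = sumPos b)
    (hEpend : ∀ b, E.Adj (inl v₀) b → sumPos b = p₀) (hex : ∃ b, E.Adj (inl v₀) b) :
    IsPendantBlowup r sumPos (inl v₀) E p₀ (inr ⟨r - 1 + p₀, by omega⟩) where
  pos_lt := by rintro (x | i) - <;> simp <;> omega
  exists_pos_eq i hi := by
    rcases Nat.eq_zero_or_pos i with rfl | hi0
    · exact ⟨inl w, by simpa using hw, rfl⟩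
    · exact ⟨inr ⟨i - 1, by omega⟩, by simp, by simp; omega⟩
  pos_eq_of_adj := hE
  pos_eq_of_adj_pend := hEpend
  exists_adj_pend := hex
  far_ne := by simp
  cycDist_far := by
    simp only [sumPos_inr, cycDist, Nat.dist]
    omega
  eq_far := by
    rintro (x | i) - hx
    · simp at hx
    · simp only [sumPos_inr, add_left_inj] at hx
      exact congrArg inr (Fin.ext hx)

theorem exists_isASC_of_two_le_card [Fintype V] (G : SimpleGraph V) (hr : 3 ≤ r)
    (hV : 2 ≤ Fintype.card V) : ∃ H : SimpleGraph (V ⊕ Fin (2 * r - 1)), IsASC r H ∧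
      ∀ u v, H.Adj (inl u) (inl v) ↔ G.Adj u v := by
  obtain ⟨v₀, w, hw⟩ := Fintype.exists_pair_of_one_lt_card hV
  by_cases hv₀ : ∃ b, G.Adj v₀ b
  · -- `v₀` is the pendant vertex, hanging from its neighbours in `G`
    obtain ⟨b, hb⟩ := hv₀
    refine ⟨_, (isPendantBlowup_sumPos (E := G.map Function.Embedding.inl) (p₀ := 0) (by omega)
      hw.symm zero_le_one ?_ ?_ ⟨inl b, map_adj_apply.mpr hb⟩).isASC hr,
      fun u v => by simp [cycleBlowup_adj]⟩
    · rintro _ _ ⟨-, x, y, -, rfl, rfl⟩ - -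
      rfl
    · rintro _ ⟨-, x, y, -, -, rfl⟩
      rfl
  · -- `v₀` is isolated in `G`: it becomes the pendant vertex, hanging from position `1`
    simp only [not_exists] at hv₀
    refine ⟨_, (isPendantBlowup_sumPos
      (E := G.map Function.Embedding.inl ⊔ edge (inl v₀) (inr ⟨0, by omega⟩)) (p₀ := 1)
      (by omega) hw.symm le_rfl ?_ ?_ ?_).isASC hr, fun u v => by simp [cycleBlowup_adj, edge_adj]⟩
    · rintro _ _ (⟨-, x, y, -, rfl, rfl⟩ | hab) ha hb
      · rfl
      · grind
    · rintro _ (⟨-, x, y, hxy, hx, rfl⟩ | hb)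
      · cases hx
        exact absurd hxy (hv₀ y)
      · obtain ⟨rfl, -⟩ := edge_adj_left_iff.mp hb
        rfl
    · exact ⟨inr ⟨0, by omega⟩, Or.inr (edge_adj_left_iff.mpr ⟨rfl, by simp⟩)⟩

theorem exists_isASC_of_subsingleton [Subsingleton V] (v₀ : V) (G : SimpleGraph V)
    (hr : 3 ≤ r) : ∃ H : SimpleGraph (V ⊕ Fin (2 * r)), IsASC r H ∧
      ∀ u v, H.Adj (inl u) (inl v) ↔ G.Adj u v := by
  have hne : ∀ x : V, (inl x : V ⊕ Fin (2 * r)) ≠ inl v₀ → False :=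
    fun x hx => hx (congrArg inl (Subsingleton.elim x v₀))
  have hB : IsPendantBlowup r (Sum.elim (fun _ => 0) (fun i : Fin (2 * r) => (i : ℕ))) (inl v₀)
      (edge (inl v₀) (inr ⟨0, by omega⟩)) 0 (inr ⟨r, by omega⟩) :=
    { pos_lt := by
        rintro (x | i) hx
        exacts [(hne x hx).elim, i.isLt]
      exists_pos_eq := fun i hi => ⟨inr ⟨i, hi⟩, by simp, rfl⟩
      pos_eq_of_adj := fun a b hab ha hb => by grind
      pos_eq_of_adj_pend := fun b hb => by
        obtain ⟨rfl, -⟩ := edge_adj_left_iff.mp hb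
        rfl
      exists_adj_pend := ⟨inr ⟨0, by omega⟩, edge_adj_left_iff.mpr ⟨rfl, by simp⟩⟩
      far_ne := by simp
      cycDist_far := by
        simp only [Sum.elim_inr, cycDist, Nat.dist]
        omega
      eq_far := by
        rintro (x | i) hx hpos
        exacts [(hne x hx).elim, congrArg inr (Fin.ext hpos)] }
  refine ⟨_, hB.isASC hr, fun u v => ?_⟩
  obtain rfl := Subsingleton.elim u v
  simp

end Constructions

lemma nonempty_iso_top_iff_card_eq_one {V : Type*} [Fintype V] (G : SimpleGraph V) :
    Nonempty (G ≃g (⊤ : SimpleGraph (Fin 1))) ↔ Fintype.card V = 1 := by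
  refine ⟨fun ⟨e⟩ => by simpa using Fintype.card_congr e.toEquiv, fun hV => ?_⟩
  have : Subsingleton V := Fintype.card_le_one_iff_subsingleton.mp hV.le
  rw [Subsingleton.elim G ⊤]
  exact ⟨Iso.completeGraph (Fintype.equivFinOfCardEq hV)⟩

lemma theta_le {V : Type*} {G : SimpleGraph V} {r k : ℕ}
    (h : ∃ H : SimpleGraph (V ⊕ Fin k), IsASC r H ∧
      ∀ u v, H.Adj (Sum.inl u) (Sum.inl v) ↔ G.Adj u v) : theta r G ≤ k :=
  Nat.sInf_le h

lemma two_mul_lt_card_add_theta {V : Type*} [Fintype V] {G : SimpleGraph V} {r k : ℕ}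
    (hr : 3 ≤ r) (h : ∃ H : SimpleGraph (V ⊕ Fin k), IsASC r H ∧
      ∀ u v, H.Adj (Sum.inl u) (Sum.inl v) ↔ G.Adj u v) :
    2 * r < Fintype.card V + theta r G := by
  obtain ⟨H, hH, -⟩ := Nat.sInf_mem (s := {k | ∃ H : SimpleGraph (V ⊕ Fin k), IsASC r H ∧
    ∀ u v, H.Adj (Sum.inl u) (Sum.inl v) ↔ G.Adj u v}) ⟨k, h⟩
  have := hH.two_mul_lt_card hr
  rwa [Fintype.card_sum, Fintype.card_fin] at this

/-- For every finite simple graph `G` and every integer `r ≥ 3`, the `r`-ASC index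
`θ_r(G)` equals `2r` if and only if `G` is isomorphic to `K_1`. -/
theorem theta_eq_two_mul_iff {V : Type*} [Fintype V]
    (G : SimpleGraph V) (r : ℕ) (hr : 3 ≤ r) :
    theta r G = 2 * r ↔ Nonempty (G ≃g (⊤ : SimpleGraph (Fin 1))) := by
  rw [nonempty_iso_top_iff_card_eq_one]
  constructor
  · intro hθ
    obtain ⟨k, hk⟩ := Nat.nonempty_of_pos_sInf (show 0 < theta r G by omega)
    have hlow := two_mul_lt_card_add_theta hr hk
    by_contra hV
    have := theta_le (exists_isASC_of_two_le_card G hr (by omega))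
    omega
  · intro hV
    have : Subsingleton V := Fintype.card_le_one_iff_subsingleton.mp hV.le
    obtain ⟨v₀⟩ := Fintype.card_pos_iff.mp (by omega : 0 < Fintype.card V)
    have h2r := exists_isASC_of_subsingleton v₀ G hr
    have := two_mul_lt_card_add_theta hr h2r
    have := theta_le h2r
    omega

end AscPaper
end

section
/- Let G be a finite simple graph of diameter 2. If G contains two vertices u and v belonging to a diametrical triple of G such that the subgraph of G induced by Ecc_G(u) ∩ Ecc_G(v) has minimum degree 0 (i.e., contains an isolated vertex), then θ_3(G) = 3. -/
namespace SimpleGraph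

variable {V V' : Type*} {G : SimpleGraph V} {a b m : V}

theorem Adj.edist_le_edist_add_one (h : G.Adj a m) : G.edist a b ≤ G.edist m b + 1 :=
  calc G.edist a b ≤ G.edist a m + G.edist m b := G.edist_triangle
    _ = G.edist m b + 1 := by rw [edist_eq_one_iff_adj.mpr h, add_comm]

theorem add_one_le_edist_of_forall_adj {n : ℕ∞} (hne : a ≠ b)
    (h : ∀ m, G.Adj a m → n ≤ G.edist m b) : n + 1 ≤ G.edist a b := by
  refine le_sInf ?_
  rintro _ ⟨p, rfl⟩
  cases p with
  | nil => exact absurd rfl hne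
  | cons hadj q =>
    change n + 1 ≤ ((q.length + 1 : ℕ) : ℕ∞)
    rw [Nat.cast_succ]
    exact add_le_add_left ((h _ hadj).trans q.edist_le) 1

theorem two_le_edist (hne : a ≠ b) (hab : ¬G.Adj a b) : 2 ≤ G.edist a b :=
  one_add_one_eq_two (R := ℕ∞) ▸ add_one_le_edist_of_forall_adj hne fun _ ham =>
    Order.one_le_iff_pos.mpr (edist_pos_of_ne fun hmb => hab (hmb ▸ ham))

theorem exists_edist_le_and_edist_le {k l : ℕ} (h : G.edist a b ≤ k + l) :
    ∃ c, G.edist a c ≤ k ∧ G.edist c b ≤ l := by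
  have hr : G.Reachable a b := reachable_of_edist_ne_top (ne_top_of_le_ne_top (by simp) h)
  obtain ⟨p, hp⟩ := hr.exists_walk_length_eq_edist
  have hlen : p.length ≤ k + l := by exact_mod_cast hp ▸ h
  refine ⟨p.getVert k, (p.take k).edist_le.trans ?_, (p.drop k).edist_le.trans ?_⟩
  · rw [Walk.take_length]; exact_mod_cast min_le_left _ _
  · rw [Walk.drop_length]; exact_mod_cast (by omega : p.length - k ≤ l)

theorem edist_map_le {G' : SimpleGraph V'} (f : G →g G') (a b : V) :
    G'.edist (f a) (f b) ≤ G.edist a b := by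
  by_cases h : G.Reachable a b
  · obtain ⟨p, hp⟩ := h.exists_walk_length_eq_edist
    rw [← hp, ← Walk.length_map f p]
    exact (p.map f).edist_le
  · rw [edist_eq_top_of_not_reachable h]
    exact le_top

theorem connected_of_eccent_ne_top (h : G.eccent a ≠ ⊤) : G.Connected :=
  G.connected_iff_exists_forall_reachable.mpr
    ⟨a, fun _ => reachable_of_edist_ne_top (ne_top_of_le_ne_top h edist_le_eccent)⟩

theorem eccent_eq_ediam_of_edist_eq (h : G.edist a b = G.ediam) : G.eccent a = G.ediam :=
  le_antisymm eccent_le_ediam (h ▸ edist_le_eccent)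

end SimpleGraph

namespace AscPaper

open SimpleGraph Sum

section

variable {V W : Type*} {G : SimpleGraph V}

theorem isASC_of_eccent {H : SimpleGraph W} {r : ℕ} {a b c : W} (hab : a ≠ b)
    (hc : H.eccent c = r) (hr : ∀ p, p ≠ a → p ≠ b → H.eccent p = r)
    (ha : r < H.eccent a) (hb : r < H.eccent b) : IsASC r H := by
  have hle : ∀ p, (r : ℕ∞) ≤ H.eccent p := fun p => by
    by_cases hpa : p = a
    · exact hpa ▸ ha.le
    by_cases hpb : p = b
    · exact hpb ▸ hb.le
    exact (hr p hpa hpb).ge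
  have hrad : H.radius = r := le_antisymm (hc ▸ radius_le_eccent) (le_iInf hle)
  refine ⟨connected_of_eccent_ne_top (hc ▸ ENat.natCast_ne_top r), hrad, ?_⟩
  have hset : {p | ecc H p ≠ graphRadius H} = {a, b} := by
    ext p
    change H.eccent p ≠ H.radius ↔ p = a ∨ p = b
    rw [hrad]
    constructor
    · intro hp
      by_contra! hab'
      exact hp (hr p hab'.1 hab'.2)
    · rintro (rfl | rfl)
      exacts [ha.ne', hb.ne']
  rw [hset, Set.ncard_pair hab]

theorem theta_eq_of_isASC {r k : ℕ}
    (hk : ∃ H : SimpleGraph (V ⊕ Fin k), IsASC r H ∧ ∀ a b, H.Adj (inl a) (inl b) ↔ G.Adj a b)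
    (hlt : ∀ j < k, ∀ H : SimpleGraph (V ⊕ Fin j),
      (∀ a b, H.Adj (inl a) (inl b) ↔ G.Adj a b) → ¬IsASC r H) :
    theta r G = k :=
  le_antisymm (Nat.sInf_le hk) <| le_csInf ⟨k, hk⟩ fun j ⟨H, hH, hGH⟩ =>
    not_lt.mp fun hj => hlt j hj H hGH hH

section Embedded

variable {H : SimpleGraph (V ⊕ W)}

theorem edist_inl_inl_le (hGH : ∀ a b, G.Adj a b → H.Adj (inl a) (inl b)) (a b : V) :
    H.edist (inl a) (inl b) ≤ G.edist a b :=
  edist_map_le ⟨inl, hGH _ _⟩ a b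

theorem edist_inl_inl_le_two (hG : G.ediam ≤ 2)
    (hGH : ∀ a b, G.Adj a b → H.Adj (inl a) (inl b)) (a b : V) :
    H.edist (inl a) (inl b) ≤ 2 :=
  (edist_inl_inl_le hGH a b).trans (edist_le_ediam.trans hG)

theorem eccent_inl_le_two (hG : G.ediam ≤ 2)
    (hGH : ∀ a b, G.Adj a b → H.Adj (inl a) (inl b)) {a : V}
    (h : ∀ w, H.edist (inr w) (inl a) ≤ 2) : H.eccent (inl a) ≤ 2 :=
  (eccent_le_iff _ _).mpr fun
    | inl b => edist_inl_inl_le_two hG hGH a b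
    | inr w => edist_comm.trans_le (h w)

end Embedded

theorem exists_eccent_inl_le_two [Nonempty V] {k : ℕ} (hk : k ≤ 2)
    {H : SimpleGraph (V ⊕ Fin k)} (hH : H.Connected) (hG : G.ediam ≤ 2)
    (hGH : ∀ a b, G.Adj a b → H.Adj (inl a) (inl b)) : ∃ a, H.eccent (inl a) ≤ 2 := by
  obtain ⟨a₀⟩ := ‹Nonempty V›
  rcases isEmpty_or_nonempty (Fin k) with hk₀ | ⟨⟨i₀⟩⟩
  · exact ⟨a₀, eccent_inl_le_two hG hGH hk₀.elim⟩
  obtain ⟨i, a, hia⟩ : ∃ i a, H.Adj (inr i) (inl a) := by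
    obtain ⟨p⟩ := hH.preconnected (inr i₀) (inl a₀)
    obtain ⟨⟨⟨_ | i, a | _⟩, hd⟩, -, hfst, hsnd⟩ :=
      p.exists_boundary_dart (Set.range inr) ⟨i₀, rfl⟩ (by simp)
    all_goals simp at hfst hsnd
    exact ⟨i, a, hd⟩
  have hcover : ∀ l : Fin k, l = i ∨ l = i.rev := fun l => by
    simp only [Fin.ext_iff, Fin.val_rev]
    omega
  obtain ⟨n, hn⟩ : ∃ n, H.Adj (inr i.rev) n := by
    obtain ⟨p⟩ := hH.preconnected (inr i.rev) (inl a₀)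
    exact ⟨_, p.adj_snd (p.not_nil_of_ne (by simp))⟩
  rcases n with b | l
  · obtain ⟨c, hac, hcb⟩ := exists_edist_le_and_edist_le (k := 1) (l := 1)
      ((edist_le_ediam (u := a) (v := b)).trans hG)
    have hnear : ∀ j d, H.Adj (inr j) (inl d) → G.edist d c ≤ 1 → H.edist (inr j) (inl c) ≤ 2 :=
      fun j d hjd hdc => hjd.edist_le_edist_add_one.trans <|
        (add_le_add_left ((edist_inl_inl_le hGH d c).trans hdc) 1).trans_eq one_add_one_eq_two
    refine ⟨c, eccent_inl_le_two hG hGH fun l => ?_⟩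
    rcases hcover l with rfl | rfl
    exacts [hnear _ a hia hac, hnear _ b hn (edist_comm.trans_le hcb)]
  · obtain rfl : l = i := (hcover l).resolve_right fun hl => H.loopless.irrefl _ (hl ▸ hn)
    refine ⟨a, eccent_inl_le_two hG hGH fun l' => ?_⟩
    have hia' : H.edist (inr l) (inl a) = 1 := edist_eq_one_iff_adj.mpr hia
    rcases hcover l' with rfl | rfl
    · exact hia'.trans_le one_le_two
    · exact hn.edist_le_edist_add_one.trans_eq (by rw [hia', one_add_one_eq_two])

theorem not_isASC_three [Nonempty V] {k : ℕ} (hk : k ≤ 2) {H : SimpleGraph (V ⊕ Fin k)}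
    (hG : G.ediam ≤ 2) (hGH : ∀ a b, G.Adj a b → H.Adj (inl a) (inl b)) : ¬IsASC 3 H := by
  rintro ⟨hH, hrad, -⟩
  obtain ⟨a, ha⟩ := exists_eccent_inl_le_two hk hH hG hGH
  have h32 : ((3 : ℕ) : ℕ∞) ≤ 2 := hrad ▸ radius_le_eccent.trans ha
  norm_num at h32

-- When `diam G = 2`, `Ecc(u) ∩ Ecc(v)` is the set of vertices at distance 2 from both `u` and `v`.
def Attached (G : SimpleGraph V) (u v x : V) : Fin 3 → V → Prop
  | 0, a => a = u
  | 1, a => a = v ∨ (a ≠ x ∧ G.edist u a = 2 ∧ G.edist v a = 2)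
  | 2, _ => False

def ascExtension (G : SimpleGraph V) (u v x : V) : SimpleGraph (V ⊕ Fin 3) where
  Adj
    | inl a, inl b => G.Adj a b
    | inl a, inr i | inr i, inl a => Attached G u v x i a
    | inr i, inr j => i ≠ j ∧ (i = 2 ∨ j = 2)
  symm := by
    constructor
    rintro (a | i) (b | j) h
    exacts [h.symm, h, h, ⟨h.1.symm, h.2.symm⟩]
  loopless := by
    constructor
    rintro (a | i) h
    exacts [G.irrefl h, h.1 rfl]

section Extension

variable {u v x a b c : V} {i j : Fin 3}

@[simp] theorem attached_one :
    Attached G u v x 1 a ↔ a = v ∨ (a ≠ x ∧ G.edist u a = 2 ∧ G.edist v a = 2) := Iff.rfl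

@[simp] theorem not_attached_two : ¬Attached G u v x 2 a := id

@[simp] theorem ascExtension_adj_inr_inl :
    (ascExtension G u v x).Adj (inr i) (inl a) ↔ Attached G u v x i a := Iff.rfl

@[simp] theorem ascExtension_adj_inr_inr :
    (ascExtension G u v x).Adj (inr i) (inr j) ↔ i ≠ j ∧ (i = 2 ∨ j = 2) := Iff.rfl

theorem ascExtension_edist_inr_inl_le (h : Attached G u v x i b) (c : V) :
    (ascExtension G u v x).edist (inr i) (inl c) ≤ G.edist b c + 1 :=
  (ascExtension_adj_inr_inl.mpr h).edist_le_edist_add_one.trans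
    (add_le_add_left (edist_inl_inl_le (fun _ _ => id) b c) 1)

theorem ascExtension_edist_inr_inr_le_two (i j : Fin 3) :
    (ascExtension G u v x).edist (inr i) (inr j) ≤ 2 := by
  have h : ∀ l, (ascExtension G u v x).edist (inr l) (inr 2) ≤ 1 := fun l => by
    rw [edist_le_one_iff_adj_or_eq]
    fin_cases l <;> simp
  calc _ ≤ _ + _ := SimpleGraph.edist_triangle (v := inr 2)
    _ ≤ 1 + 1 := add_le_add (h i) (edist_comm.trans_le (h j))
    _ = 2 := one_add_one_eq_two

theorem two_le_ascExtension_edist_inr_inl (h : ¬Attached G u v x i c) :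
    2 ≤ (ascExtension G u v x).edist (inr i) (inl c) :=
  two_le_edist inr_ne_inl h

theorem three_le_ascExtension_edist_inr_inl (hi : i ≠ 2) (hc : ¬Attached G u v x i c)
    (hV : ∀ b, Attached G u v x i b → ¬G.Adj b c) :
    3 ≤ (ascExtension G u v x).edist (inr i) (inl c) := by
  refine two_add_one_eq_three (R := ℕ∞) ▸ add_one_le_edist_of_forall_adj inr_ne_inl ?_
  rintro (b | j) h
  · exact two_le_edist (fun hbc => hc (inl_injective hbc ▸ h)) (hV b h)
  · obtain rfl : j = 2 := (ascExtension_adj_inr_inr.mp h).2.resolve_left hi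
    exact two_le_ascExtension_edist_inr_inl not_attached_two

theorem three_le_ascExtension_edist_inr_two (h₀ : ¬Attached G u v x 0 c)
    (h₁ : ¬Attached G u v x 1 c) : 3 ≤ (ascExtension G u v x).edist (inr 2) (inl c) := by
  refine two_add_one_eq_three (R := ℕ∞) ▸ add_one_le_edist_of_forall_adj inr_ne_inl ?_
  rintro (b | j) h
  · exact absurd h (by simp)
  · fin_cases j
    exacts [two_le_ascExtension_edist_inr_inl h₀, two_le_ascExtension_edist_inr_inl h₁,
      absurd h (by simp)]

theorem three_le_ascExtension_edist_inr_zero (h : G.edist u c = 2) :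
    3 ≤ (ascExtension G u v x).edist (inr 0) (inl c) := by
  obtain ⟨hne, hnadj, -⟩ := edist_eq_two_iff.mp h
  exact three_le_ascExtension_edist_inr_inl (by decide) (Ne.symm hne) fun b hb => hb ▸ hnadj

theorem three_le_ascExtension_edist_inr_one_inl_x (hvx : G.edist v x = 2)
    (hiso : ∀ y, G.edist u y = 2 → G.edist v y = 2 → ¬G.Adj x y) :
    3 ≤ (ascExtension G u v x).edist (inr 1) (inl x) := by
  obtain ⟨hne, hnadj, -⟩ := edist_eq_two_iff.mp hvx
  refine three_le_ascExtension_edist_inr_inl (by decide) (by simp [Ne.symm hne]) ?_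
  rintro b (rfl | ⟨-, hub, hvb⟩)
  exacts [hnadj, fun hbx => hiso b hub hvb hbx.symm]

theorem four_le_ascExtension_edist_inr_two_inl_x (hux : G.edist u x = 2)
    (hvx : G.edist v x = 2) (hiso : ∀ y, G.edist u y = 2 → G.edist v y = 2 → ¬G.Adj x y) :
    4 ≤ (ascExtension G u v x).edist (inr 2) (inl x) := by
  refine three_add_one_eq_four (R := ℕ∞) ▸ add_one_le_edist_of_forall_adj inr_ne_inl ?_
  rintro (b | j) h
  · exact absurd h (by simp)
  · fin_cases j
    exacts [three_le_ascExtension_edist_inr_zero hux,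
      three_le_ascExtension_edist_inr_one_inl_x hvx hiso, absurd h (by simp)]

theorem three_le_ascExtension_eccent_inl (huv : G.edist u v = 2) (c : V) :
    3 ≤ (ascExtension G u v x).eccent (inl c) := by
  suffices ∃ i, 3 ≤ (ascExtension G u v x).edist (inr i) (inl c) by
    obtain ⟨i, hi⟩ := this
    exact hi.trans (edist_comm.trans_le edist_le_eccent)
  by_cases h0 : Attached G u v x 0 c
  · obtain rfl : c = u := h0
    obtain ⟨hne, hnadj, -⟩ := edist_eq_two_iff.mp huv
    refine ⟨1, three_le_ascExtension_edist_inr_inl (by decide) (by simp [hne]) ?_⟩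
    rintro b (rfl | ⟨-, hub, -⟩)
    exacts [fun h => hnadj h.symm, fun h => (edist_eq_two_iff.mp hub).2.1 h.symm]
  by_cases h1 : Attached G u v x 1 c
  · obtain rfl | ⟨-, huc, -⟩ := h1
    exacts [⟨0, three_le_ascExtension_edist_inr_zero huv⟩,
      ⟨0, three_le_ascExtension_edist_inr_zero huc⟩]
  exact ⟨2, three_le_ascExtension_edist_inr_two h0 h1⟩

theorem exists_attached_edist_le_one (hG : G.ediam ≤ 2) (hc : c ≠ x) :
    ∃ i b, Attached G u v x i b ∧ G.edist b c ≤ 1 := by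
  by_cases hu : G.edist u c ≤ 1
  · exact ⟨0, u, rfl, hu⟩
  by_cases hv : G.edist v c ≤ 1
  · exact ⟨1, v, Or.inl rfl, hv⟩
  have h2 : ∀ a, ¬G.edist a c ≤ 1 → G.edist a c = 2 := fun a ha =>
    le_antisymm (edist_le_ediam.trans hG) (Order.add_one_le_of_lt (not_le.mp ha))
  exact ⟨1, c, Or.inr ⟨hc, h2 u hu, h2 v hv⟩, by simp⟩

theorem ascExtension_eccent_inl_le_three (hG : G.ediam ≤ 2) (hc : c ≠ x) :
    (ascExtension G u v x).eccent (inl c) ≤ 3 := by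
  have hGc : ∀ b, G.edist b c + 1 ≤ 3 := fun b =>
    (add_le_add_left (edist_le_ediam.trans hG) 1).trans_eq two_add_one_eq_three
  rw [eccent_le_iff]
  rintro (b | i)
  · exact (edist_inl_inl_le_two hG (fun _ _ => id) c b).trans (by norm_num)
  rw [edist_comm]
  fin_cases i
  · exact (ascExtension_edist_inr_inl_le (i := 0) (b := u) rfl c).trans (hGc u)
  · exact (ascExtension_edist_inr_inl_le (i := 1) (b := v) (Or.inl rfl) c).trans (hGc v)
  obtain ⟨i, b, hb, hbc⟩ := exists_attached_edist_le_one (u := u) (v := v) hG hc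
  have hi : (ascExtension G u v x).Adj (inr 2) (inr i) := by
    fin_cases i <;> simp_all
  calc _ ≤ (ascExtension G u v x).edist (inr i) (inl c) + 1 := hi.edist_le_edist_add_one
    _ ≤ G.edist b c + 1 + 1 := by gcongr; exact ascExtension_edist_inr_inl_le hb c
    _ ≤ 1 + 1 + 1 := by gcongr
    _ = 3 := by norm_num

theorem ascExtension_eccent_inr_le_three (hG : G.ediam ≤ 2) (h : Attached G u v x i b) :
    (ascExtension G u v x).eccent (inr i) ≤ 3 := by
  rw [eccent_le_iff]
  rintro (c | j)
  · exact (ascExtension_edist_inr_inl_le h c).trans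
      ((add_le_add_left (edist_le_ediam.trans hG) 1).trans_eq two_add_one_eq_three)
  · exact (ascExtension_edist_inr_inr_le_two i j).trans (by norm_num)

theorem isASC_ascExtension (hG : G.ediam ≤ 2) (huv : G.edist u v = 2)
    (hux : G.edist u x = 2) (hvx : G.edist v x = 2)
    (hiso : ∀ y, G.edist u y = 2 → G.edist v y = 2 → ¬G.Adj x y) :
    IsASC 3 (ascExtension G u v x) := by
  have h4 := four_le_ascExtension_edist_inr_two_inl_x hux hvx hiso
  have hz₀ : (ascExtension G u v x).eccent (inr 0) = 3 :=
    le_antisymm (ascExtension_eccent_inr_le_three (b := u) hG rfl)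
      ((three_le_ascExtension_edist_inr_zero hux).trans edist_le_eccent)
  have hz₁ : (ascExtension G u v x).eccent (inr 1) = 3 :=
    le_antisymm (ascExtension_eccent_inr_le_three (b := v) hG (Or.inl rfl))
      ((three_le_ascExtension_edist_inr_one_inl_x hvx hiso).trans edist_le_eccent)
  refine isASC_of_eccent (a := inl x) (b := inr 2) inl_ne_inr hz₀ ?_ ?_ ?_
  · rintro (c | i) hc h2
    · exact le_antisymm (ascExtension_eccent_inl_le_three hG (fun h => hc (h ▸ rfl)))
        (three_le_ascExtension_eccent_inl huv c)
    · fin_cases i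
      exacts [hz₀, hz₁, absurd rfl h2]
  · exact (by norm_num : (3 : ℕ∞) < 4).trans_le (h4.trans (edist_comm.trans_le edist_le_eccent))
  · exact (by norm_num : (3 : ℕ∞) < 4).trans_le (h4.trans edist_le_eccent)

end Extension

end

theorem theta_three_of_isolated_in_ecc_general {V : Type*} (G : SimpleGraph V)
    (hdiam : graphDiam G = 2)
    (u v : V)
    (h1 : G.edist u v = graphDiam G)
    (x : V) (hx : x ∈ eccSet G u ∩ eccSet G v)
    (hiso : ∀ y ∈ eccSet G u ∩ eccSet G v, ¬ G.Adj x y) :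
    theta 3 G = 3 := by
  have hG : G.ediam ≤ 2 := hdiam.le
  have hu : ecc G u = 2 := (eccent_eq_ediam_of_edist_eq h1).trans hdiam
  have hv : ecc G v = 2 := (eccent_eq_ediam_of_edist_eq (edist_comm.trans h1)).trans hdiam
  have hecc : ∀ y, y ∈ eccSet G u ∩ eccSet G v ↔ G.edist u y = 2 ∧ G.edist v y = 2 := by
    intro y
    change G.edist u y = ecc G u ∧ G.edist v y = ecc G v ↔ _
    rw [hu, hv]
  have : Nonempty V := ⟨u⟩
  refine theta_eq_of_isASC ⟨ascExtension G u v x, ?_, fun _ _ => Iff.rfl⟩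
    fun k hk H hGH => not_isASC_three (by omega) hG fun a b => (hGH a b).mpr
  obtain ⟨hux, hvx⟩ := (hecc x).mp hx
  exact isASC_ascExtension hG (h1.trans hdiam) hux hvx fun y huy hvy =>
    hiso y ((hecc y).mpr ⟨huy, hvy⟩)

/-- If `G` has diameter 2 and contains vertices `u`, `v` of a diametrical triple such
that the subgraph induced by `Ecc(u) ∩ Ecc(v)` contains an isolated vertex, then
`θ_3(G) = 3`. -/
theorem theta_three_of_isolated_in_ecc {V : Type*} [Fintype V] (G : SimpleGraph V)
    (hdiam : graphDiam G = 2)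
    (u v w : V) (huv : u ≠ v) (huw : u ≠ w) (hvw : v ≠ w)
    (h1 : G.edist u v = graphDiam G) (h2 : G.edist u w = graphDiam G)
    (h3 : G.edist v w = graphDiam G)
    (x : V) (hx : x ∈ eccSet G u ∩ eccSet G v)
    (hiso : ∀ y ∈ eccSet G u ∩ eccSet G v, ¬ G.Adj x y) :
    theta 3 G = 3 :=
  theta_three_of_isolated_in_ecc_general G hdiam u v h1 x hx hiso

end AscPaper
end
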